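/- The Clebsch–Gordan pairing ⟨u,v⟩_p, viewed as a bilinear map V_m × V_n → V_{m+n-2p}, is equivariant for the derivation action of sl(2): for any α in the Lie algebra generated by X = y∂/∂x, Y = -x∂/∂y, H = x∂/∂x - y∂/∂y, we have α(⟨u,v⟩_p) = ⟨α(u), v⟩_p + ⟨u, α(v)⟩_p. -/

import Mathlib

/-!
Up to the factor `1 / p!`, the pairing is the transvectant
`∑ k, (-1)^k C(p,k) D^(p-k) D'^k u * D^k D'^(p-k) v` of the commuting derivations `D = ∂/∂x`,
`D' = ∂/∂y`. For a vector field `t D` with `D t = a` and `D' t = b` constant, moving `D^i D'^j`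
past `t` produces the extra terms `i a D^i D'^j + j b D^(i+1) D'^(j-1)`. Inside the transvectant
the `a`-terms add up to `p a` times the pairing, and the `b`-terms telescope away because
`C(p,k+1) (k+1) = C(p,k) (p-k)`. So `y ∂/∂x` acts as a derivation of the pairing, and so do
`x ∂/∂y` and `x ∂/∂x - y ∂/∂y` (the two shifts by `p` cancel), since exchanging `D` and `D'`
only multiplies the transvectant by `(-1)^p`. The operators acting as derivations of a bilinear
map form a Lie subalgebra, which therefore contains the whole Lie span.
-/

open MvPolynomial

noncomputable section

abbrev P := MvPolynomial (Fin 2) ℝ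

/-- partial derivative, as a plain function -/
def pd (i : Fin 2) (u : P) : P := MvPolynomial.pderiv i u

/-- The Clebsch-Gordan pairing of binary forms. -/
def CG (p : ℕ) (u v : P) : P :=
  ((p.factorial : ℝ)⁻¹) •
    ∑ k ∈ Finset.range (p + 1),
      (((-1 : ℝ) ^ k * (p.choose k : ℝ)) •
        ((pd 0)^[p - k] ((pd 1)^[k] u) * (pd 0)^[k] ((pd 1)^[p - k] v)))

/-- X = y ∂/∂x as a linear endomorphism of polynomials. -/
def Xe : Module.End ℝ P :=
  (LinearMap.mulLeft ℝ (X 1 : P)).comp (MvPolynomial.pderiv (0 : Fin 2)).toLinearMap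

/-- Y = -x ∂/∂y. -/
def Ye : Module.End ℝ P :=
  - (LinearMap.mulLeft ℝ (X 0 : P)).comp (MvPolynomial.pderiv (1 : Fin 2)).toLinearMap

/-- H = x ∂/∂x - y ∂/∂y. -/
def He : Module.End ℝ P :=
  (LinearMap.mulLeft ℝ (X 0 : P)).comp (MvPolynomial.pderiv (0 : Fin 2)).toLinearMap
    - (LinearMap.mulLeft ℝ (X 1 : P)).comp (MvPolynomial.pderiv (1 : Fin 2)).toLinearMap

attribute [local instance] LieRing.ofAssociativeRing

open Finset

section Leibniz

variable {R M : Type*} [CommRing R] [AddCommGroup M] [Module R M]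

def LinearMap.leibnizSubalgebra (B : M →ₗ[R] M →ₗ[R] M) :
    LieSubalgebra R (Module.End R M) where
  carrier := {T | ∀ u v, T (B u v) = B (T u) v + B u (T v)}
  add_mem' {S T} hS hT u v := by
    rw [LinearMap.add_apply, hS u v, hT u v]
    simp only [LinearMap.add_apply, map_add]
    abel
  zero_mem' u v := by simp
  smul_mem' c T hT u v := by simp [hT u v]
  lie_mem' {S T} hS hT u v := by
    simp only [Ring.lie_def, LinearMap.sub_apply, Module.End.mul_apply, hS _ _, hT _ _, map_sub,
      map_add]
    abel

namespace LinearMap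

variable {B : M →ₗ[R] M →ₗ[R] M}

theorem mem_leibnizSubalgebra {T : Module.End R M} :
    T ∈ B.leibnizSubalgebra ↔ ∀ u v, T (B u v) = B (T u) v + B u (T v) := Iff.rfl

theorem leibnizSubalgebra_le_smul (c : R) : B.leibnizSubalgebra ≤ (c • B).leibnizSubalgebra :=
  fun T hT u v => by simp [hT u v]

end LinearMap

theorem sum_range_alternating_choose_telescope (p : ℕ) (f g : ℕ → M)
    (hfg : ∀ k < p, g k = f (k + 1)) :
    ∑ k ∈ range (p + 1), ((-1 : R) ^ k * p.choose k * k) • f k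
      + ∑ k ∈ range (p + 1), ((-1 : R) ^ k * p.choose k * (p - k : ℕ)) • g k = 0 := by
  rw [sum_range_succ', sum_range_succ]
  simp only [Nat.cast_zero, mul_zero, zero_smul, add_zero, Nat.sub_self, ← sum_add_distrib]
  refine sum_eq_zero fun k hk => ?_
  rw [hfg k (mem_range.mp hk), ← add_smul]
  refine smul_eq_zero_of_left ?_ _
  have h := congrArg (Nat.cast (R := R)) (Nat.choose_succ_right_eq p k)
  push_cast at h ⊢
  linear_combination (-1 : R) ^ (k + 1) * h

end Leibniz

namespace Derivation

variable {R A : Type*} [CommRing R] [CommRing A] [Algebra R A] (D D' : Derivation R A A)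

theorem pow_apply_mul {t : A} {a : R} (ht : D t = algebraMap R A a) (k : ℕ) (x : A) :
    ((D : Module.End R A) ^ k) (t * x)
      = t * ((D : Module.End R A) ^ k) x + (k * a) • ((D : Module.End R A) ^ (k - 1)) x := by
  have hD (n : ℕ) (y : A) :
      D (((D : Module.End R A) ^ n) y) = ((D : Module.End R A) ^ (n + 1)) y := by
    rw [pow_succ', Module.End.mul_apply, coeFn_coe]
  induction k with
  | zero => simp
  | succ k ih =>
    have hta :
        ((D : Module.End R A) ^ k) x • algebraMap R A a = a • ((D : Module.End R A) ^ k) x := by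
      rw [smul_eq_mul, mul_comm, Algebra.smul_def]
    rw [pow_succ', Module.End.mul_apply, ih, map_add, LinearMap.map_smul, coeFn_coe, leibniz, ht,
      hD, ← pow_succ', smul_eq_mul, Nat.add_sub_cancel]
    rcases k with _ | k
    · simp [Algebra.smul_def, mul_comm]
    · rw [hD, Nat.add_sub_cancel, hta]
      push_cast
      module

def mixedPow (i j : ℕ) : Module.End R A := (D : Module.End R A) ^ i * (D' : Module.End R A) ^ j

def transvectant (p : ℕ) : A →ₗ[R] A →ₗ[R] A :=
  ∑ k ∈ range (p + 1), ((-1 : R) ^ k * p.choose k) •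
    (LinearMap.mul R A).compl₁₂ (mixedPow D D' (p - k) k) (mixedPow D D' k (p - k))

variable {D D'}

theorem transvectant_apply (p : ℕ) (u v : A) :
    transvectant D D' p u v = ∑ k ∈ range (p + 1),
      ((-1 : R) ^ k * p.choose k) • (mixedPow D D' (p - k) k u * mixedPow D D' k (p - k) v) := by
  simp [transvectant]

theorem apply_mixedPow (i j : ℕ) (w : A) :
    D (mixedPow D D' i j w) = mixedPow D D' (i + 1) j w := by
  simp [mixedPow, pow_succ']

theorem mixedPow_apply_mul (hDD' : Commute (D : Module.End R A) D') {t : A} {a b : R}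
    (ha : D t = algebraMap R A a) (hb : D' t = algebraMap R A b) (i j : ℕ) (w : A) :
    mixedPow D D' i j (t * D w) = t * mixedPow D D' (i + 1) j w + (i * a) • mixedPow D D' i j w
      + (j * b) • mixedPow D D' (i + 1) (j - 1) w := by
  have hD : ((D : Module.End R A) ^ i) (t * D w)
      = t * ((D : Module.End R A) ^ (i + 1)) w + (i * a) • ((D : Module.End R A) ^ i) w := by
    rw [pow_apply_mul D ha, ← coeFn_coe, ← Module.End.mul_apply, ← pow_succ]
    rcases i with _ | i
    · simp
    · simp [pow_succ _ i]
  simp only [mixedPow, ((hDD'.pow_pow _ _).eq), Module.End.mul_apply, hD, map_add,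
    LinearMap.map_smul, pow_apply_mul D' hb]
  abel

theorem mixedPow_swap (hDD' : Commute (D : Module.End R A) D') (i j : ℕ) :
    mixedPow D' D i j = mixedPow D D' j i :=
  (hDD'.pow_pow j i).eq.symm

theorem transvectant_swap (hDD' : Commute (D : Module.End R A) D') (p : ℕ) :
    transvectant D' D p = (-1 : R) ^ p • transvectant D D' p := by
  ext u v
  rw [transvectant_apply, LinearMap.smul_apply, LinearMap.smul_apply, transvectant_apply,
    ← sum_range_reflect, smul_sum]
  refine sum_congr rfl fun k hk => ?_
  have hkp : k ≤ p := Nat.le_of_lt_succ (mem_range.mp hk)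
  rw [Nat.add_sub_cancel, Nat.sub_sub_self hkp, mixedPow_swap hDD', mixedPow_swap hDD',
    Nat.choose_symm hkp, smul_smul]
  congr 1
  rw [← pow_sub_mul_pow (-1 : R) hkp, mul_assoc, ← mul_assoc ((-1 : R) ^ k), ← pow_add,
    Even.neg_one_pow ⟨k, rfl⟩, one_mul]

theorem transvectant_mul_apply_add (hDD' : Commute (D : Module.End R A) D') {t : A} {a b : R}
    (ha : D t = algebraMap R A a) (hb : D' t = algebraMap R A b) (p : ℕ) (u v : A) :
    transvectant D D' p (t * D u) v + transvectant D D' p u (t * D v)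
      = t * D (transvectant D D' p u v) + (p * a) • transvectant D D' p u v := by
  let c (k : ℕ) : R := (-1 : R) ^ k * p.choose k
  let uv (k : ℕ) : A := mixedPow D D' (p - k) k u * mixedPow D D' k (p - k) v
  let f (k : ℕ) : A := mixedPow D D' (p - k + 1) (k - 1) u * mixedPow D D' k (p - k) v
  let g (k : ℕ) : A := mixedPow D D' (p - k) k u * mixedPow D D' (k + 1) (p - k - 1) v
  have hfg : ∀ k < p, g k = f (k + 1) := fun k hk => by
    simp only [f, g, Nat.add_sub_cancel, show p - (k + 1) + 1 = p - k by omega, Nat.sub_sub]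
  have hterm : ∀ k ∈ range (p + 1),
      c k • (mixedPow D D' (p - k) k (t * D u) * mixedPow D D' k (p - k) v)
        + c k • (mixedPow D D' (p - k) k u * mixedPow D D' k (p - k) (t * D v))
      = t * D (c k • uv k) + (p * a) • c k • uv k
        + b • ((c k * k) • f k + (c k * (p - k : ℕ)) • g k) := by
    intro k hk
    have hkp : ((p - k : ℕ) : R) = p - k := Nat.cast_sub (Nat.le_of_lt_succ (mem_range.mp hk))
    simp only [uv, f, g, mixedPow_apply_mul hDD' ha hb, map_smul, leibniz, smul_eq_mul,
      apply_mixedPow, hkp]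
    simp only [Algebra.smul_def, map_mul, map_sub]
    ring
  calc transvectant D D' p (t * D u) v + transvectant D D' p u (t * D v)
      = ∑ k ∈ range (p + 1),
          (c k • (mixedPow D D' (p - k) k (t * D u) * mixedPow D D' k (p - k) v)
            + c k • (mixedPow D D' (p - k) k u * mixedPow D D' k (p - k) (t * D v))) := by
        rw [transvectant_apply, transvectant_apply, sum_add_distrib]
    _ = t * D (transvectant D D' p u v) + (p * a) • transvectant D D' p u v
          + b • (∑ k ∈ range (p + 1), (c k * k) • f k
            + ∑ k ∈ range (p + 1), (c k * (p - k : ℕ)) • g k) := by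
        rw [sum_congr rfl hterm, sum_add_distrib, sum_add_distrib, ← smul_sum, ← smul_sum,
          sum_add_distrib, transvectant_apply, map_sum, mul_sum]
    _ = t * D (transvectant D D' p u v) + (p * a) • transvectant D D' p u v := by
        rw [sum_range_alternating_choose_telescope p f g hfg, smul_zero, add_zero]

theorem mulLeft_comp_sub_mem_leibnizSubalgebra (hDD' : Commute (D : Module.End R A) D') {t : A}
    {a b : R} (ha : D t = algebraMap R A a) (hb : D' t = algebraMap R A b) (p : ℕ) :
    LinearMap.mulLeft R t ∘ₗ D.toLinearMap - ((p : R) * a) • 1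
      ∈ (transvectant D D' p).leibnizSubalgebra := by
  refine LinearMap.mem_leibnizSubalgebra.mpr fun u v => ?_
  simp only [LinearMap.sub_apply, LinearMap.smul_apply, Module.End.one_apply,
    LinearMap.comp_apply, LinearMap.mulLeft_apply, map_sub, LinearMap.map_smul]
  -- `c • 1` contributes `c` to the left-hand side of the Leibniz rule and `2 c` to the right.
  linear_combination (norm := module) -transvectant_mul_apply_add hDD' ha hb p u v

end Derivation

theorem MvPolynomial.commute_pderiv {R σ : Type*} [CommRing R] (i j : σ) :
    Commute (pderiv (R := R) i).toLinearMap (pderiv (R := R) j).toLinearMap := by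
  have h : ⁅pderiv (R := R) i, pderiv (R := R) j⁆ = 0 := by
    refine derivation_ext fun k => ?_
    rw [Derivation.commutator_apply]
    classical
    simp [pderiv_X, Pi.single_apply, apply_ite]
  refine LinearMap.ext fun f => sub_eq_zero.mp ?_
  simpa [Derivation.commutator_apply] using congr($h f)

open Derivation in
def cgBilin (p : ℕ) : P →ₗ[ℝ] P →ₗ[ℝ] P :=
  (p.factorial : ℝ)⁻¹ • transvectant (pderiv 0) (pderiv 1) p

theorem cgBilin_apply (p : ℕ) (u v : P) : cgBilin p u v = CG p u v := by
  simp only [cgBilin, LinearMap.smul_apply, Derivation.transvectant_apply, Derivation.mixedPow,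
    Module.End.mul_apply, Module.End.coe_pow, Derivation.coeFn_coe, CG]
  rfl

section Generators

open Derivation

variable (p : ℕ)

theorem Xe_mem_leibnizSubalgebra :
    Xe ∈ (transvectant (pderiv 0) (pderiv 1) p).leibnizSubalgebra := by
  simpa [Xe] using mulLeft_comp_sub_mem_leibnizSubalgebra (commute_pderiv 0 1)
    (t := (X 1 : P)) (a := (0 : ℝ)) (b := 1) (by simp) (by simp) p

theorem Ye_mem_leibnizSubalgebra :
    Ye ∈ (transvectant (pderiv 0) (pderiv 1) p).leibnizSubalgebra := by
  rw [transvectant_swap (commute_pderiv 1 0)]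
  refine LinearMap.leibnizSubalgebra_le_smul _ (neg_mem ?_)
  simpa [Ye] using mulLeft_comp_sub_mem_leibnizSubalgebra (commute_pderiv 1 0)
    (t := (X 0 : P)) (a := (0 : ℝ)) (b := 1) (by simp) (by simp) p

theorem He_mem_leibnizSubalgebra :
    He ∈ (transvectant (pderiv 0) (pderiv 1) p).leibnizSubalgebra := by
  have hx := mulLeft_comp_sub_mem_leibnizSubalgebra (commute_pderiv 0 1)
    (t := (X 0 : P)) (a := (1 : ℝ)) (b := 0) (by simp) (by simp) p
  have hy := mulLeft_comp_sub_mem_leibnizSubalgebra (commute_pderiv 1 0)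
    (t := (X 1 : P)) (a := (1 : ℝ)) (b := 0) (by simp) (by simp) p
  replace hy := LinearMap.leibnizSubalgebra_le_smul ((-1) ^ p) hy
  rw [← transvectant_swap (commute_pderiv 1 0)] at hy
  simpa [He] using sub_mem hx hy

end Generators

theorem cg_sl2_equivariance :
    ∀ α ∈ LieSubalgebra.lieSpan ℝ (Module.End ℝ P) ({Xe, Ye, He} : Set (Module.End ℝ P)),
      ∀ (m n p : ℕ) (u v : P), u.IsHomogeneous m → v.IsHomogeneous n →
        α (CG p u v) = CG p (α u) v + CG p u (α v) := by
  intro α hα _ _ p u v _ _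
  have hgen : {Xe, Ye, He} ⊆ ((cgBilin p).leibnizSubalgebra : Set (Module.End ℝ P)) := by
    rintro _ (rfl | rfl | rfl) <;> apply LinearMap.leibnizSubalgebra_le_smul
    exacts [Xe_mem_leibnizSubalgebra p, Ye_mem_leibnizSubalgebra p, He_mem_leibnizSubalgebra p]
  simpa only [cgBilin_apply] using
    LinearMap.mem_leibnizSubalgebra.mp (LieSubalgebra.lieSpan_le.mpr hgen hα) u v
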